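/- (Decrementing Lemma) Let d_embed ≥ 5 and H = [h_t]_{1≤t≤ℓ} ∈ ℝ^{d_embed×ℓ} be an embedding matrix with rows d_embed−2, d_embed−1 equal to the positional encodings 𝓘_t and last row all ones. Then for any 1 ≤ r₁ ≤ r₂ ≤ d_embed−3, any 1 ≤ k₁, k₂ ≤ ℓ, and any M > 0, there exists a six-layer residual feed-forward ReLU network FFN with ‖θ_FFN‖_∞ ≤ O(ℓ M) such that FFN(h_t) + h_t = h_t for t ∈ {1,…,k₁} ∪ {k₂,…,ℓ}, while for all other t, FFN(h_t) + h_t subtracts M from coordinates r₁ through r₂ of h_t and leaves all other coordinates unchanged. -/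

import Mathlib

open scoped BigOperators
open Metric Set MeasureTheory
open scoped Matrix

namespace Paper

noncomputable section

/-- ReLU activation. -/
def relu (x : ℝ) : ℝ := max x 0

/-- Euclidean space `ℝ^D` with the `ℓ²` norm. -/
abbrev Euc (D : ℕ) := EuclideanSpace ℝ (Fin D)

/-- Maximum absolute entry of a matrix (`‖H‖_{∞,∞}`). -/
def matSup {m n : ℕ} (H : Matrix (Fin m) (Fin n) ℝ) : ℝ := ⨆ i, ⨆ j, |H i j|

/-- Sup norm `‖x‖_∞` of a vector. -/
def supNorm {D : ℕ} (x : Fin D → ℝ) : ℝ := ⨆ i, |x i|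

/-- An attention head: query, key and value matrices. -/
structure Head (de : ℕ) where
  Q : Matrix (Fin de) (Fin de) ℝ
  K : Matrix (Fin de) (Fin de) ℝ
  V : Matrix (Fin de) (Fin de) ℝ

/-- Action of an attention head on an embedding matrix:
`A(H) = V H σ((K H)ᵀ Q H)` with `σ = ReLU`. -/
def Head.eval {de : ℕ} (A : Head de) {ℓ : ℕ} (H : Matrix (Fin de) (Fin ℓ) ℝ) :
    Matrix (Fin de) (Fin ℓ) ℝ :=
  A.V * H * ((A.K * H)ᵀ * (A.Q * H)).map relu

/-- Tokenwise action of an attention head: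
`A(h_t) = Σ_j σ(⟨Q h_t, K h_j⟩) V h_j`. -/
def Head.tokenEval {de ℓ : ℕ} (A : Head de) (H : Matrix (Fin de) (Fin ℓ) ℝ)
    (t : Fin ℓ) : Fin de → ℝ := fun i =>
  ∑ j : Fin ℓ,
    relu (∑ k, A.Q.mulVec (fun r => H r t) k * A.K.mulVec (fun r => H r j) k) *
      A.V.mulVec (fun r => H r j) i

/-- Maximum weight magnitude of an attention head. -/
def Head.wnorm {de : ℕ} (A : Head de) : ℝ := matSup A.Q ⊔ matSup A.K ⊔ matSup A.V

/-- A fully-connected (tokenwise) ReLU feed-forward network of depth `L`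
and hidden width `w` on embedding dimension `de`. -/
structure FFN (de w L : ℕ) where
  Win : Matrix (Fin w) (Fin de) ℝ
  bin : Fin w → ℝ
  Wmid : Fin L → Matrix (Fin w) (Fin w) ℝ
  bmid : Fin L → Fin w → ℝ
  Wout : Matrix (Fin de) (Fin w) ℝ
  bout : Fin de → ℝ

/-- Evaluation of a feed-forward ReLU network on one token. -/
def FFN.eval {de w L : ℕ} (f : FFN de w L) (x : Fin de → ℝ) : Fin de → ℝ :=
  let h0 : Fin w → ℝ := fun i => relu (∑ j, f.Win i j * x j + f.bin i)
  let hL : Fin w → ℝ := (List.finRange L).foldl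
    (fun h k => fun i => relu (∑ j, f.Wmid k i j * h j + f.bmid k i)) h0
  fun i => ∑ j, f.Wout i j * hL j + f.bout i

/-- Maximum weight magnitude of a feed-forward network. -/
def FFN.wnorm {de w L : ℕ} (f : FFN de w L) : ℝ :=
  matSup f.Win ⊔ (⨆ i, |f.bin i|) ⊔ (⨆ k, matSup (f.Wmid k)) ⊔
    (⨆ k, ⨆ i, |f.bmid k i|) ⊔ matSup f.Wout ⊔ (⨆ i, |f.bout i|)

/-- A two-layer feed-forward ReLU network. -/
structure TwoLayerFFN (de w : ℕ) where
  W1 : Matrix (Fin w) (Fin de) ℝ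
  b1 : Fin w → ℝ
  W2 : Matrix (Fin de) (Fin w) ℝ
  b2 : Fin de → ℝ

def TwoLayerFFN.eval {de w : ℕ} (f : TwoLayerFFN de w) (x : Fin de → ℝ) :
    Fin de → ℝ := fun i =>
  ∑ j, f.W2 i j * relu (∑ k, f.W1 j k * x k + f.b1 j) + f.b2 i

def TwoLayerFFN.wnorm {de w : ℕ} (f : TwoLayerFFN de w) : ℝ :=
  matSup f.W1 ⊔ (⨆ i, |f.b1 i|) ⊔ matSup f.W2 ⊔ (⨆ i, |f.b2 i|)

/-- A transformer block `B(H) = FFN(MHA(H)+H) + MHA(H) + H` with `m` attention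
heads and a tokenwise feed-forward network of depth `L` and width `w`;
this formalizes the class `𝓑(m, L, de)`. -/
structure Block (de m w L : ℕ) where
  heads : Fin m → Head de
  ffn : FFN de w L

def Block.eval {de m w L : ℕ} (B : Block de m w L) {ℓ : ℕ}
    (H : Matrix (Fin de) (Fin ℓ) ℝ) : Matrix (Fin de) (Fin ℓ) ℝ :=
  let H1 := (∑ j, (B.heads j).eval H) + H
  Matrix.of (fun i t => B.ffn.eval (fun r => H1 r t) i) + H1

def Block.wnorm {de m w L : ℕ} (B : Block de m w L) : ℝ :=
  (⨆ j, (B.heads j).wnorm) ⊔ B.ffn.wnorm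

/-- A transformer network: linear embedding, positional encoding, `LT` transformer
blocks (each with `mT` heads and FFNs of depth `LF`, width `wF`), and a decoding
layer returning the first entry of the last column. -/
structure TransformerNet (D LT mT de ℓ LF wF : ℕ) where
  emb : Fin de → Fin ℓ → Fin D → ℝ
  PE : Matrix (Fin de) (Fin ℓ) ℝ
  blocks : Fin LT → Block de mT wF LF

def TransformerNet.eval {D LT mT de ℓ LF wF : ℕ}
    (T : TransformerNet D LT mT de ℓ LF wF) (x : Fin D → ℝ) : ℝ :=
  let H0 : Matrix (Fin de) (Fin ℓ) ℝ :=
    T.PE + Matrix.of fun i t => ∑ j, T.emb i t j * x j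
  let HL := (List.finRange LT).foldl (fun H k => (T.blocks k).eval H) H0
  if h : 0 < de ∧ 0 < ℓ then HL ⟨0, h.1⟩ ⟨ℓ - 1, Nat.sub_lt h.2 Nat.one_pos⟩ else 0

/-- Maximum weight magnitude `‖θ‖_∞` of a transformer network. -/
def TransformerNet.wnorm {D LT mT de ℓ LF wF : ℕ}
    (T : TransformerNet D LT mT de ℓ LF wF) : ℝ :=
  (⨆ i, ⨆ t, ⨆ j, |T.emb i t j|) ⊔ matSup T.PE ⊔ (⨆ k, (T.blocks k).wnorm)

/-- Membership in the transformer class `𝒯(L_T, m_T, d_embed, ℓ, L_FFN, w_FFN, R, κ)`: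
sup-norm output bound `R` and weight magnitudes at most `κ`. -/
def TransformerNet.inClass {D LT mT de ℓ LF wF : ℕ}
    (T : TransformerNet D LT mT de ℓ LF wF) (R κ : ℝ) : Prop :=
  (∀ x : Fin D → ℝ, |T.eval x| ≤ R) ∧ T.wnorm ≤ κ

/-- Medial axis of a set. -/
def medialAxis {D : ℕ} (S : Set (Euc D)) : Set (Euc D) :=
  {x | ∃ p ∈ S, ∃ q ∈ S, p ≠ q ∧
    dist p x = infDist x S ∧ dist q x = infDist x S}

/-- Local reach `τ_M(v)`. -/
def localReach {D : ℕ} (S : Set (Euc D)) (v : Euc D) : ℝ :=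
  infDist v (medialAxis S)

/-- Reach `τ_M` of a set. -/
def reach {D : ℕ} (S : Set (Euc D)) : ℝ := ⨅ v ∈ S, localReach S v

/-- Geodesic distance on `S`: infimum of lengths of `C¹` curves in `S`. -/
def geoDist {D : ℕ} (S : Set (Euc D)) (v v' : Euc D) : ℝ :=
  sInf {l : ℝ | ∃ γ : ℝ → Euc D, (∀ t ∈ Icc (0:ℝ) 1, γ t ∈ S) ∧
    ContDiffOn ℝ 1 γ (Icc 0 1) ∧ γ 0 = v ∧ γ 1 = v' ∧
    l = ∫ t in (0:ℝ)..1, ‖deriv γ t‖}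

/-- Orthogonal projection onto `S` (a choice of nearest point, when one exists). -/
def projOn {D : ℕ} (S : Set (Euc D)) (x : Euc D) : Euc D :=
  Classical.epsilon fun y => y ∈ S ∧ dist x y = infDist x S

/-- A nonempty, compact, connected `d`-dimensional manifold `M ⊆ [0,1]^D`,
together with a choice of orthonormal tangent frames `P(v)`. -/
structure GoodManifold (D d : ℕ) where
  carrier : Set (Euc D)
  nonempty : carrier.Nonempty
  compact : IsCompact carrier
  connected : IsConnected carrier
  subset_cube : ∀ x ∈ carrier, ∀ i, x i ∈ Icc (0:ℝ) 1
  locallyEuclidean : ∀ v ∈ carrier, ∃ U : Set (Euc D), IsOpen U ∧ v ∈ U ∧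
    ∃ V : Set (EuclideanSpace ℝ (Fin d)), IsOpen V ∧
      Nonempty (↥(carrier ∩ U) ≃ₜ ↥V)
  frame : Euc D → Matrix (Fin D) (Fin d) ℝ
  frame_orthonormal : ∀ v ∈ carrier, (frame v)ᵀ * frame v = 1

/-- The tubular region `M(q)` around the manifold. -/
def GoodManifold.tube {D d : ℕ} (M : GoodManifold D d) (q : ℝ) : Set (Euc D) :=
  {x | ∃ v ∈ M.carrier, ∃ u : Euc D, x = v + u ∧
    (M.frame v)ᵀ.mulVec (fun i => u i) = 0 ∧
    ‖u‖ < q * localReach M.carrier v}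

/-- The volume `Vol(M)`: the `d`-dimensional Hausdorff measure of the carrier. -/
def vol {D d : ℕ} (M : GoodManifold D d) : ℝ :=
  (MeasureTheory.Measure.hausdorffMeasure (d : ℝ) M.carrier).toReal

/-- A maximal `δ`-separated net `{z₁,…,z_K}` of `M` w.r.t. geodesic distance. -/
structure SepNet {D d : ℕ} (M : GoodManifold D d) (δ : ℝ) (K : ℕ) where
  z : Fin K → Euc D
  mem : ∀ i, z i ∈ M.carrier
  sep : ∀ i j, i ≠ j → δ < geoDist M.carrier (z i) (z j)
  maximal : ∀ y ∈ M.carrier, ∃ i, geoDist M.carrier y (z i) ≤ δ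

/-- The bump functions `η̃_i` built from the net, with `p = (1+q)/2` and
`h = 6/(1 - q p⁻¹)`. -/
def etaTilde {D d K : ℕ} (M : GoodManifold D d) (q δ : ℝ) (N : SepNet M δ K)
    (i : Fin K) (x : Euc D) : ℝ :=
  relu (1 - (dist x (N.z i) / (((1 + q) / 2) * localReach M.carrier (N.z i))) ^ 2
    - (Real.sqrt (∑ j, (∑ r, M.frame (N.z i) r j * (x r - N.z i r)) ^ 2)
        / ((6 / (1 - q / ((1 + q) / 2))) * δ)) ^ 2)

/-- The normalized partition of unity `η_i = η̃_i / ‖η̃‖₁`. -/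
def etaFun {D d K : ℕ} (M : GoodManifold D d) (q δ : ℝ) (N : SepNet M δ K)
    (i : Fin K) (x : Euc D) : ℝ :=
  etaTilde M q δ N i x / ∑ j, etaTilde M q δ N j x

/-- Embedding matrix predicate for `d_embed = 5`: second row zero, rows 3–4 the
sinusoidal positional encodings, fifth row all ones. -/
def IsEmbed5 {ℓ : ℕ} (H : Matrix (Fin 5) (Fin ℓ) ℝ) : Prop :=
  (∀ t, H 1 t = 0) ∧
  (∀ t : Fin ℓ, H 2 t = Real.cos ((((t : ℕ) : ℝ) + 1) * Real.pi / (2 * ℓ))) ∧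
  (∀ t : Fin ℓ, H 3 t = Real.sin ((((t : ℕ) : ℝ) + 1) * Real.pi / (2 * ℓ))) ∧
  (∀ t, H 4 t = 1)

/-- Embedding matrix predicate for general `d_embed = e + 5 ≥ 5`: rows
`d_embed−2, d_embed−1` are the positional encodings and the last row is all ones. -/
def IsEmbedG (e ℓ : ℕ) (H : Matrix (Fin (e + 5)) (Fin ℓ) ℝ) : Prop :=
  (∀ t : Fin ℓ, H ⟨e + 2, by omega⟩ t
      = Real.cos ((((t : ℕ) : ℝ) + 1) * Real.pi / (2 * ℓ))) ∧
  (∀ t : Fin ℓ, H ⟨e + 3, by omega⟩ t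
      = Real.sin ((((t : ℕ) : ℝ) + 1) * Real.pi / (2 * ℓ))) ∧
  (∀ t, H ⟨e + 4, by omega⟩ t = 1)

/-
Token `t` sits at angle `θ_t = (t+1)π/(2ℓ)`. Two first-layer units compute
`ReLU(β sin(θ_t - φ₁))` and `ReLU(β sin(φ₂ - θ_t))`, where `φ₁, φ₂` lie half a step after `k₁`
and half a step before `k₂`. Since no token is closer than half a step to `φ₁` or `φ₂`, Jordan's
inequality `sin x ≥ 2x/π` shows that each unit is either `0` or at least `β/(2ℓ)`; with
`β = 2ℓs`, `s = min 1 M`, this is a margin `s` obtained with weights `O(ℓM)`. Two threshold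
layers turn the pair into an AND gate whose value is `1/w` on the window and `0` elsewhere,
broadcast to all `w` hidden units. Averaging layers (all weights `1/w`) pass this constant
vector on unchanged, and the output layer sums the `w` copies with weight `-M` on rows
`r₁, …, r₂`. Taking the width `w ≥ s⁻³` lets every weight stay below `4ℓM`.
-/

section Decrementer

open Real Matrix

theorem relu_nonneg (x : ℝ) : 0 ≤ relu x := le_max_right x 0

theorem relu_of_nonneg {x : ℝ} (hx : 0 ≤ x) : relu x = x := max_eq_left hx

theorem relu_of_nonpos {x : ℝ} (hx : x ≤ 0) : relu x = 0 := max_eq_right hx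

def posAngle (L x : ℝ) : ℝ := x * π / (2 * L)

theorem posAngle_sub (L x y : ℝ) : posAngle L x - posAngle L y = posAngle L (x - y) := by
  unfold posAngle; ring

theorem sin_posAngle_nonpos {L D : ℝ} (hL : 0 < L) (hD : -(2 * L) ≤ D) (hD0 : D ≤ 0) :
    sin (posAngle L D) ≤ 0 := by
  unfold posAngle
  apply sin_nonpos_of_nonpos_of_neg_pi_le
  · exact div_nonpos_of_nonpos_of_nonneg (mul_nonpos_of_nonpos_of_nonneg hD0 pi_pos.le)
      (by positivity)
  · rw [le_div_iff₀ (by positivity)]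
    nlinarith [pi_pos]

theorem inv_two_mul_le_sin_posAngle {L D : ℝ} (hD : 1 / 2 ≤ D) (hDL : D ≤ L) :
    (2 * L)⁻¹ ≤ sin (posAngle L D) := by
  have hL : 0 < L := by linarith
  have hx : 0 ≤ posAngle L D := by unfold posAngle; positivity
  have hxπ : posAngle L D ≤ π / 2 := by
    unfold posAngle
    rw [div_le_div_iff₀ (by positivity) two_pos]
    nlinarith [pi_pos]
  calc (2 * L)⁻¹ ≤ D / L := by
        rw [inv_eq_one_div, div_le_div_iff₀ (by positivity) hL]; nlinarith
    _ = 2 / π * posAngle L D := by unfold posAngle; field_simp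
    _ ≤ sin (posAngle L D) := mul_le_sin hx hxπ

def sinRow {ι : Type*} [DecidableEq ι] (ic is : ι) (φ : ℝ) : ι → ℝ :=
  Pi.single is (cos φ) - Pi.single ic (sin φ)

theorem sinRow_dotProduct {ι : Type*} [Fintype ι] [DecidableEq ι] {ic is : ι} {x : ι → ℝ}
    {θ : ℝ} (hc : x ic = cos θ) (hs : x is = sin θ) (φ : ℝ) :
    sinRow ic is φ ⬝ᵥ x = sin (θ - φ) := by
  rw [sinRow, sub_dotProduct, single_dotProduct, single_dotProduct, hc, hs, sin_sub]
  ring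

theorem abs_sinRow_le {ι : Type*} [DecidableEq ι] (ic is : ι) (φ : ℝ) (j : ι) :
    |sinRow ic is φ j| ≤ 2 := by
  refine (abs_sub _ _).trans ?_
  rw [Pi.single_apply, Pi.single_apply]
  have := abs_cos_le_one φ
  have := abs_sin_le_one φ
  split_ifs <;> linarith [abs_zero (α := ℝ)]

def notGate (s y : ℝ) : ℝ := relu (-s * relu y + s ^ 2)

def andGate (s c y z : ℝ) : ℝ := relu (-s * (notGate s y + notGate s z) + c)

theorem notGate_eq {s y : ℝ} {P : Prop} [Decidable P] (hs : 0 < s) (hyP : P → y ≤ 0)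
    (hy : ¬P → s ≤ y) : notGate s y = if P then s ^ 2 else 0 := by
  unfold notGate
  split_ifs with hP
  · rw [relu_of_nonpos (hyP hP), mul_zero, zero_add, relu_of_nonneg (by positivity)]
  · have hy := hy hP
    rw [relu_of_nonneg (hs.le.trans hy), relu_of_nonpos (by nlinarith)]

theorem andGate_eq {s c y z : ℝ} {P Q : Prop} [Decidable P] [Decidable Q] (hs : 0 < s)
    (hc : 0 ≤ c) (hcs : c ≤ s ^ 3) (hyP : P → y ≤ 0) (hy : ¬P → s ≤ y) (hzQ : Q → z ≤ 0)
    (hz : ¬Q → s ≤ z) : andGate s c y z = if P ∨ Q then 0 else c := by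
  rw [andGate, notGate_eq hs hyP hy, notGate_eq hs hzQ hz]
  split_ifs with hPQ hP hQ hQ <;> first
    | (rw [relu_of_nonpos]; nlinarith [sq_nonneg s])
    | (simp only [add_zero, mul_zero, zero_add]; exact relu_of_nonneg hc)
    | tauto

theorem andGate_window_eq {ℓ k₁ k₂ t : ℕ} (ht : t < ℓ) (hk₁ : k₁ ≤ ℓ) (hk₂ : k₂ ≤ ℓ)
    {s c : ℝ} (hs : 0 < s) (hc : 0 ≤ c) (hcs : c ≤ s ^ 3) :
    andGate s c (2 * ℓ * s * sin (posAngle ℓ (t + 1) - posAngle ℓ (k₁ + 1 / 2)))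
      (-(2 * ℓ * s) * sin (posAngle ℓ (t + 1) - posAngle ℓ (k₂ - 1 / 2))) =
      if t < k₁ ∨ k₂ ≤ t + 1 then 0 else c := by
  have ht' : (t : ℝ) + 1 ≤ ℓ := by exact_mod_cast ht
  have hk₁' : (k₁ : ℝ) ≤ ℓ := by exact_mod_cast hk₁
  have hk₂' : (k₂ : ℝ) ≤ ℓ := by exact_mod_cast hk₂
  have hℓ : (0 : ℝ) < ℓ := by linarith [(t.cast_nonneg : (0 : ℝ) ≤ t)]
  have hβ : 0 ≤ 2 * ℓ * s := by positivity
  have hmargin : ∀ {D : ℝ}, 1 / 2 ≤ D → D ≤ ℓ → s ≤ 2 * ℓ * s * sin (posAngle ℓ D) :=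
    fun h1 h2 => by
      have := mul_le_mul_of_nonneg_left (inv_two_mul_le_sin_posAngle h1 h2) hβ
      rwa [show 2 * ℓ * s * (2 * (ℓ : ℝ))⁻¹ = s by field_simp] at this
  rw [neg_mul, ← mul_neg, ← sin_neg, neg_sub, posAngle_sub, posAngle_sub]
  apply andGate_eq hs hc hcs
  · intro h
    have : (t : ℝ) + 1 ≤ k₁ := by exact_mod_cast h
    exact mul_nonpos_of_nonneg_of_nonpos hβ (sin_posAngle_nonpos hℓ (by linarith) (by linarith))
  · intro h
    have : (k₁ : ℝ) ≤ t := by exact_mod_cast not_lt.mp h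
    exact hmargin (by linarith) (by linarith)
  · intro h
    have : (k₂ : ℝ) ≤ t + 1 := by exact_mod_cast h
    exact mul_nonpos_of_nonneg_of_nonpos hβ
      (sin_posAngle_nonpos hℓ (by linarith [(k₂.cast_nonneg : (0 : ℝ) ≤ k₂)]) (by linarith))
  · intro h
    have : (t : ℝ) + 2 ≤ k₂ := by exact_mod_cast not_le.mp h
    exact hmargin (by linarith) (by linarith)

def layer {m n : ℕ} (W : Matrix (Fin m) (Fin n) ℝ) (b : Fin m → ℝ) (h : Fin n → ℝ) :
    Fin m → ℝ :=
  fun i => relu ((W *ᵥ h) i + b i)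

theorem FFN.eval_eq_layers {de w : ℕ} (f : FFN de w 6) (x : Fin de → ℝ) :
    f.eval x = f.Wout *ᵥ
      (layer (f.Wmid 5) (f.bmid 5) <| layer (f.Wmid 4) (f.bmid 4) <|
        layer (f.Wmid 3) (f.bmid 3) <| layer (f.Wmid 2) (f.bmid 2) <|
          layer (f.Wmid 1) (f.bmid 1) <| layer (f.Wmid 0) (f.bmid 0) <| layer f.Win f.bin x) +
      f.bout := by
  have h6 : List.finRange 6 = [0, 1, 2, 3, 4, 5] := by decide
  rw [FFN.eval, h6]
  rfl

theorem layer_of {m n : ℕ} (r : Fin m → Fin n → ℝ) (b : Fin m → ℝ) (h : Fin n → ℝ) :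
    layer (Matrix.of r) b h = fun i => relu (r i ⬝ᵥ h + b i) :=
  rfl

theorem layer_diagonal {n : ℕ} (d b h : Fin n → ℝ) :
    layer (Matrix.diagonal d) b h = fun i => relu (d i * h i + b i) := by
  funext i
  rw [layer, mulVec_diagonal]

theorem layer_average_const {m n : ℕ} [NeZero n] {c : ℝ} (hc : 0 ≤ c) :
    layer (Matrix.of fun _ _ => (n : ℝ)⁻¹ : Matrix (Fin m) (Fin n) ℝ) 0 (fun _ => c) =
      fun _ => c := by
  have hn : (n : ℝ) ≠ 0 := Nat.cast_ne_zero.mpr (NeZero.ne n)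
  funext i
  simp [layer_of, dotProduct, mul_inv_cancel_left₀ hn, relu_of_nonneg hc]

theorem matSup_le {m n : ℕ} {A : Matrix (Fin m) (Fin n) ℝ} {K : ℝ} (hK : 0 ≤ K)
    (hA : ∀ i j, |A i j| ≤ K) : matSup A ≤ K :=
  Real.iSup_le (fun i => Real.iSup_le (hA i) hK) hK

theorem FFN.wnorm_le {de w L : ℕ} {f : FFN de w L} {K : ℝ} (hK : 0 ≤ K)
    (hWin : ∀ i j, |f.Win i j| ≤ K) (hbin : ∀ i, |f.bin i| ≤ K)
    (hWmid : ∀ k i j, |f.Wmid k i j| ≤ K) (hbmid : ∀ k i, |f.bmid k i| ≤ K)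
    (hWout : ∀ i j, |f.Wout i j| ≤ K) (hbout : ∀ i, |f.bout i| ≤ K) : f.wnorm ≤ K := by
  unfold FFN.wnorm
  refine sup_le (sup_le (sup_le (sup_le (sup_le ?_ ?_) ?_) ?_) ?_) ?_
  · exact matSup_le hK hWin
  · exact Real.iSup_le hbin hK
  · exact Real.iSup_le (fun k => matSup_le hK (hWmid k)) hK
  · exact Real.iSup_le (fun k => Real.iSup_le (hbmid k) hK) hK
  · exact matSup_le hK hWout
  · exact Real.iSup_le hbout hK

def decrementer {de : ℕ} (ic is : Fin de) (p : Fin de → Prop) [DecidablePred p] (n : ℕ)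
    (β φ₁ φ₂ s M : ℝ) : FFN de (n + 2) 6 where
  Win := Matrix.of fun i => if i = 0 then β • sinRow ic is φ₁ else -β • sinRow ic is φ₂
  bin := 0
  Wmid k :=
    if k = 0 then Matrix.diagonal fun _ => -s
    else if k = 1 then Matrix.of fun _ => -s • (Pi.single 0 1 + Pi.single 1 1)
    else Matrix.of fun _ _ => ((n + 2 : ℕ) : ℝ)⁻¹
  bmid k := if k = 0 then fun _ => s ^ 2 else if k = 1 then fun _ => ((n + 2 : ℕ) : ℝ)⁻¹ else 0
  Wout := Matrix.of fun i _ => if p i then -M else 0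
  bout := 0

section

variable {de : ℕ} {ic is : Fin de} {p : Fin de → Prop} [DecidablePred p] {n : ℕ}
  {β φ₁ φ₂ s M : ℝ}

theorem decrementer_eval (x : Fin de → ℝ) :
    (decrementer ic is p n β φ₁ φ₂ s M).eval x = fun i =>
      if p i then -M * ((n + 2 : ℕ) * andGate s ((n + 2 : ℕ) : ℝ)⁻¹
        (β * (sinRow ic is φ₁ ⬝ᵥ x)) (-β * (sinRow ic is φ₂ ⬝ᵥ x))) else 0 := by
  set y := β * (sinRow ic is φ₁ ⬝ᵥ x)
  set z := -β * (sinRow ic is φ₂ ⬝ᵥ x)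
  set g := andGate s ((n + 2 : ℕ) : ℝ)⁻¹ y z
  rw [FFN.eval_eq_layers]
  simp only [decrementer, Fin.reduceEq, ↓reduceIte]
  have h₀ : layer (Matrix.of fun (i : Fin (n + 2)) =>
      if i = 0 then β • sinRow ic is φ₁ else -β • sinRow ic is φ₂) 0 x =
      fun i => if i = 0 then relu y else relu z := by
    funext i
    by_cases hi : i = 0 <;> simp [layer_of, hi, smul_dotProduct, y, z]
  have h₁ : layer (Matrix.of fun (_ : Fin (n + 2)) => -s • (Pi.single 0 1 + Pi.single 1 1))
      (fun _ => ((n + 2 : ℕ) : ℝ)⁻¹)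
      (fun i : Fin (n + 2) => relu ((-s * if i = 0 then relu y else relu z) + s ^ 2)) =
      fun _ => g := by
    funext i
    simp only [layer_of, smul_add, neg_smul, add_dotProduct, neg_dotProduct, smul_dotProduct,
      single_dotProduct, one_mul, smul_eq_mul, mul_ite, neg_mul, ↓reduceIte, one_ne_zero,
      Nat.cast_add, Nat.cast_ofNat, g, andGate, notGate]
    ring_nf
  have hg : 0 ≤ g := relu_nonneg _
  rw [h₀, layer_diagonal, h₁, layer_average_const hg, layer_average_const hg,
    layer_average_const hg, layer_average_const hg]
  funext i
  by_cases hi : p i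
  · simp only [Pi.add_apply, mulVec, dotProduct, of_apply, hi, ↓reduceIte, Finset.sum_const,
      Finset.card_univ, Fintype.card_fin, nsmul_eq_mul, Pi.zero_apply, add_zero]
    ring
  · simp [mulVec, dotProduct, hi]

theorem decrementer_wnorm_le {K : ℝ} (hs0 : 0 ≤ s) (hs1 : s ≤ 1) (hβ : 2 * |β| ≤ K)
    (hs : 2 * s ≤ K) (hn : ((n + 2 : ℕ) : ℝ)⁻¹ ≤ K) (hM : |M| ≤ K) :
    (decrementer ic is p n β φ₁ φ₂ s M).wnorm ≤ K := by
  have hK : 0 ≤ K := by linarith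
  have hsinRow : ∀ (γ φ : ℝ) j, |γ • sinRow ic is φ j| ≤ 2 * |γ| := fun γ φ j => by
    rw [smul_eq_mul, abs_mul, mul_comm]
    exact mul_le_mul_of_nonneg_right (abs_sinRow_le ic is φ j) (abs_nonneg γ)
  have hn0 : 0 ≤ ((n + 2 : ℕ) : ℝ)⁻¹ := by positivity
  apply FFN.wnorm_le hK
  · intro i j
    simp only [decrementer, Matrix.of_apply]
    split_ifs
    · exact (hsinRow β φ₁ j).trans hβ
    · exact (hsinRow (-β) φ₂ j).trans (by rwa [abs_neg])
  · simp [decrementer, hK]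
  · intro k i j
    simp only [decrementer]
    split_ifs
    · rw [Matrix.diagonal_apply]
      split_ifs <;> simp [abs_of_nonneg hs0] <;> linarith
    · simp only [Matrix.of_apply, Pi.smul_apply, Pi.add_apply, Pi.single_apply, smul_eq_mul]
      split_ifs <;> norm_num [abs_of_nonneg hs0] <;> linarith
    · rwa [Matrix.of_apply, abs_of_nonneg hn0]
  · intro k i
    simp only [decrementer]
    split_ifs
    · rw [abs_of_nonneg (by positivity)]; nlinarith
    · rwa [abs_of_nonneg hn0]
    · simp [hK]
  · intro i j
    simp only [decrementer, Matrix.of_apply]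
    split_ifs
    · rwa [abs_neg]
    · simp [hK]
  · simp [decrementer, hK]

end

theorem inv_natCast_ceil_inv_add_two_le {a : ℝ} (ha : 0 < a) :
    ((⌈a⁻¹⌉₊ + 2 : ℕ) : ℝ)⁻¹ ≤ a := by
  refine inv_le_of_inv_le₀ ha ?_
  push_cast
  linarith [Nat.le_ceil a⁻¹]

end Decrementer

/-- Decrementing Lemma: a six-layer residual feed-forward network
subtracting `M` from coordinates `r₁,…,r₂` (1-indexed) of the tokens strictly
between the prefix `{1,…,k₁}` and the suffix `{k₂,…,ℓ}`. Here `d_embed = e + 5`. -/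
theorem decrementing_lemma :
    ∃ C : ℝ, 0 < C ∧
      ∀ (e ℓ : ℕ) (H : Matrix (Fin (e + 5)) (Fin ℓ) ℝ), IsEmbedG e ℓ H →
      ∀ r₁ r₂ k₁ k₂ : ℕ, 1 ≤ r₁ → r₁ ≤ r₂ → r₂ ≤ e + 2 →
        1 ≤ k₁ → k₁ ≤ ℓ → 1 ≤ k₂ → k₂ ≤ ℓ →
      ∀ M : ℝ, 0 < M →
      ∃ (w : ℕ) (f : FFN (e + 5) w 6),
        f.wnorm ≤ C * (ℓ : ℝ) * M ∧
        ∀ t : Fin ℓ,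
          (fun i => f.eval (fun r => H r t) i + H i t) = fun i =>
            if (t : ℕ) < k₁ ∨ k₂ ≤ (t : ℕ) + 1 then H i t
            else if r₁ ≤ (i : ℕ) + 1 ∧ (i : ℕ) + 1 ≤ r₂ then H i t - M
            else H i t := by
  refine ⟨4, by norm_num, ?_⟩
  rintro e ℓ H ⟨hcos, hsin, -⟩ r₁ r₂ k₁ k₂ - - - hk₁ hk₁ℓ - hk₂ℓ M hM
  set s := min 1 M
  set n := ⌈(s ^ 3)⁻¹⌉₊
  have hs : 0 < s := lt_min one_pos hM
  have hsM : s ≤ M := min_le_right 1 M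
  have hs1 : s ≤ 1 := min_le_left 1 M
  have hℓ : (1 : ℝ) ≤ ℓ := by exact_mod_cast hk₁.trans hk₁ℓ
  have hn : ((n + 2 : ℕ) : ℝ)⁻¹ ≤ s ^ 3 := inv_natCast_ceil_inv_add_two_le (by positivity)
  refine ⟨n + 2, decrementer ⟨e + 2, by omega⟩ ⟨e + 3, by omega⟩
    (fun i => r₁ ≤ (i : ℕ) + 1 ∧ (i : ℕ) + 1 ≤ r₂) n (2 * ℓ * s)
    (posAngle ℓ (k₁ + 1 / 2)) (posAngle ℓ (k₂ - 1 / 2)) s M, ?_, fun t => ?_⟩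
  · have hs3 : s ^ 3 ≤ s := by nlinarith [pow_le_one₀ hs.le hs1 (n := 2)]
    have hβ : |2 * (ℓ : ℝ) * s| = 2 * ℓ * s := abs_of_pos (by positivity)
    refine decrementer_wnorm_le hs.le hs1 ?_ ?_ ?_ ?_
    · rw [hβ]; nlinarith
    · nlinarith
    · nlinarith
    · rw [abs_of_pos hM]; nlinarith
  · have hrow := sinRow_dotProduct (x := fun r => H r t) (θ := posAngle ℓ (t + 1)) (hcos t) (hsin t)
    have hN : (n : ℝ) + 2 ≠ 0 := by positivity
    funext i
    rw [decrementer_eval, hrow, hrow,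
      andGate_window_eq t.isLt hk₁ℓ hk₂ℓ hs (by positivity) hn]
    dsimp only
    split_ifs <;> simp [hN, sub_eq_neg_add]

end
end Paper
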